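/- arXiv:1510.05049 — 2 statements merged into one kernel-verified Lean document; each statement's English description precedes it below -/
import Mathlib

section
/- Let h : ℝ² → ℝ² be a lift of a torus homeomorphism homotopic to the identity whose rotation set has nonempty interior in ℝ². Then for every nonzero u ∈ ℝ², the deviation of h in direction u is unbounded. -/
open Filter Topology MeasureTheory

noncomputable section

/-- The plane ℝ². -/
abbrev V2 : Type := ℝ × ℝ

/-- Euclidean dot product on ℝ². -/
def dot (x y : V2) : ℝ := x.1 * y.1 + x.2 * y.2

/-- Euclidean norm on ℝ². -/
def nrm (x : V2) : ℝ := Real.sqrt (dot x x)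

/-- v^⊥ = (−v₂, v₁). -/
def perp (v : V2) : V2 := (-v.2, v.1)

/-- Inclusion of ℤ² into ℝ². -/
def intVec (u : ℤ × ℤ) : V2 := ((u.1 : ℝ), (u.2 : ℝ))

/-- `f` is a lift of a torus map: it commutes with all integer translations. -/
def IsLift (f : V2 → V2) : Prop := ∀ (z : V2) (u : ℤ × ℤ), f (z + intVec u) = f z + intVec u

/-- The Misiurewicz–Ziemian rotation set of `f`. -/
def RotSet (f : V2 → V2) : Set V2 :=
  {v | ∃ (n : ℕ → ℕ) (x : ℕ → V2), Tendsto n atTop atTop ∧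
    Tendsto (fun i => ((n i : ℝ))⁻¹ • (f^[n i] (x i) - x i)) atTop (𝓝 v)}

/-! Bounded deviation in direction `u` makes `n ↦ ⟨hⁿ(0), u⟩` quasi-additive, so every rotation
vector `v` satisfies `|⟨v, u⟩ - ⟨hⁿ(0), u⟩ / n| ≤ K / n` for all `n ≥ 1`. Hence `⟨·, u⟩` is constant
on the rotation set, which then lies on a line orthogonal to `u` and has empty interior. -/

lemma dot_add (x y u : V2) : dot (x + y) u = dot x u + dot y u := by
  simp only [dot, Prod.fst_add, Prod.snd_add]; ring

lemma dot_sub (x y u : V2) : dot (x - y) u = dot x u - dot y u := by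
  simp only [dot, Prod.fst_sub, Prod.snd_sub]; ring

lemma dot_smul (c : ℝ) (x u : V2) : dot (c • x) u = c * dot x u := by
  simp only [dot, Prod.smul_fst, Prod.smul_snd, smul_eq_mul]; ring

lemma dot_zero_left (u : V2) : dot 0 u = 0 := by simp [dot]

lemma continuous_dot_left (u : V2) : Continuous (fun x : V2 => dot x u) := by
  unfold dot; fun_prop

lemma dot_self_pos {u : V2} (hu : u ≠ 0) : 0 < dot u u := by
  obtain h1 | h2 : u.1 ≠ 0 ∨ u.2 ≠ 0 := by
    by_contra! hc
    exact hu (Prod.ext hc.1 hc.2)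
  · exact add_pos_of_pos_of_nonneg (mul_self_pos.2 h1) (mul_self_nonneg _)
  · exact add_pos_of_nonneg_of_pos (mul_self_nonneg _) (mul_self_pos.2 h2)

lemma exists_dot_ne_of_interior_nonempty {S : Set V2} (hS : (interior S).Nonempty)
    {u : V2} (hu : u ≠ 0) : ∃ v ∈ S, ∃ w ∈ S, dot v u ≠ dot w u := by
  obtain ⟨v, hv⟩ := hS
  have hline : Tendsto (fun t : ℝ => v + t • u) (𝓝[≠] 0) (𝓝 v) := by
    have : Continuous (fun t : ℝ => v + t • u) := by fun_prop
    simpa using (this.tendsto 0).mono_left nhdsWithin_le_nhds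
  obtain ⟨t, ht, ht0⟩ :=
    ((hline.eventually (isOpen_interior.mem_nhds hv)).and self_mem_nhdsWithin).exists
  refine ⟨v, interior_subset hv, v + t • u, interior_subset ht, ?_⟩
  rw [dot_add, dot_smul, ne_eq, left_eq_add]
  exact mul_ne_zero ht0 (dot_self_pos hu).ne'

section QuasiAdditive

variable {d : ℕ → ℝ} {K : ℝ}

lemma abs_sub_nsmul_le_of_quasiAdditive (hq : ∀ n m, |d (n + m) - d n - d m| ≤ K)
    (n : ℕ) {k : ℕ} (hk : 0 < k) : |d (k * n) - k * d n| ≤ k * K := by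
  induction k, hk using Nat.le_induction with
  | base => simpa using (abs_nonneg _).trans (hq 0 0)
  | succ k _ ih =>
    calc |d ((k + 1) * n) - ((k + 1 : ℕ) : ℝ) * d n|
        = |(d (k * n + n) - d (k * n) - d n) + (d (k * n) - k * d n)| := by
          rw [add_mul, one_mul]; push_cast; ring_nf
      _ ≤ |d (k * n + n) - d (k * n) - d n| + |d (k * n) - k * d n| := abs_add_le _ _
      _ ≤ K + k * K := add_le_add (hq _ _) ih
      _ = ((k + 1 : ℕ) : ℝ) * K := by push_cast; ring

lemma abs_div_sub_div_le_of_quasiAdditive (hq : ∀ n m, |d (n + m) - d n - d m| ≤ K)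
    {n m : ℕ} (hn : 0 < n) (hm : 0 < m) : |d n / n - d m / m| ≤ K / n + K / m := by
  have hn' : (0 : ℝ) < n := by exact_mod_cast hn
  have hm' : (0 : ℝ) < m := by exact_mod_cast hm
  have hcross : |m * d n - n * d m| ≤ m * K + n * K :=
    calc |m * d n - n * d m|
        = |(d (n * m) - n * d m) - (d (m * n) - m * d n)| := by rw [mul_comm n m]; ring_nf
      _ ≤ |d (n * m) - n * d m| + |d (m * n) - m * d n| := abs_sub _ _
      _ ≤ n * K + m * K :=
          add_le_add (abs_sub_nsmul_le_of_quasiAdditive hq m hn)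
            (abs_sub_nsmul_le_of_quasiAdditive hq n hm)
      _ = m * K + n * K := add_comm _ _
  have hnm : (0 : ℝ) < n * m := mul_pos hn' hm'
  calc |d n / n - d m / m| = |m * d n - n * d m| / (n * m) := by
        rw [← abs_of_pos hnm, ← abs_div]; congr 1; field_simp
    _ ≤ (m * K + n * K) / (n * m) := div_le_div_of_nonneg_right hcross hnm.le
    _ = K / n + K / m := by field_simp

end QuasiAdditive

/-- `de_u(f) ≤ K / ‖u‖`, restricted to forward iterates. -/
def DeviationBounded (f : V2 → V2) (u : V2) (K : ℝ) : Prop :=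
  ∀ (n : ℕ) (x y : V2), |dot ((f^[n] x - x) - (f^[n] y - y)) u| ≤ K

namespace DeviationBounded

variable {f : V2 → V2} {u : V2} {K : ℝ}

lemma abs_dot_sub_le (hf : DeviationBounded f u K) (n : ℕ) (x : V2) :
    |dot (f^[n] x - x) u - dot (f^[n] 0) u| ≤ K := by
  simpa [dot_sub, dot_zero_left] using hf n x 0

lemma quasiAdditive (hf : DeviationBounded f u K) (n m : ℕ) :
    |dot (f^[n + m] 0) u - dot (f^[n] 0) u - dot (f^[m] 0) u| ≤ K := by
  rw [add_comm n m, Function.iterate_add_apply]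
  convert hf m (f^[n] 0) 0 using 2
  simp only [dot_sub, dot_zero_left]
  ring

lemma abs_dot_rotSet_sub_le (hf : DeviationBounded f u K) {v : V2} (hv : v ∈ RotSet f)
    {n : ℕ} (hn : 0 < n) : |dot v u - dot (f^[n] 0) u / n| ≤ K / n := by
  obtain ⟨ns, xs, hns, hlim⟩ := hv
  set c := dot (f^[n] 0) u / n
  have hdot : Tendsto (fun i => dot ((ns i : ℝ)⁻¹ • (f^[ns i] (xs i) - xs i)) u) atTop
      (𝓝 (dot v u)) := ((continuous_dot_left u).tendsto v).comp hlim
  have hbound : Tendsto (fun i => K / ns i + (K / ns i + K / n)) atTop (𝓝 (K / n)) := by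
    have : Tendsto (fun i => K / (ns i : ℝ)) atTop (𝓝 0) :=
      tendsto_const_nhds.div_atTop (tendsto_natCast_atTop_atTop.comp hns)
    simpa using this.add (this.add_const (K / n))
  refine le_of_tendsto_of_tendsto ((hdot.sub_const c).abs) hbound ?_
  filter_upwards [hns.eventually_ge_atTop 1] with i hi
  have hi' : (0 : ℝ) < ns i := by exact_mod_cast hi
  have hx : |(ns i : ℝ)⁻¹ * dot (f^[ns i] (xs i) - xs i) u - dot (f^[ns i] 0) u / ns i|
      ≤ K / ns i := by
    rw [inv_mul_eq_div, ← sub_div, abs_div, abs_of_pos hi']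
    exact div_le_div_of_nonneg_right (hf.abs_dot_sub_le _ _) hi'.le
  have hd := abs_div_sub_div_le_of_quasiAdditive (d := fun k => dot (f^[k] 0) u)
    hf.quasiAdditive hi hn
  rw [dot_smul]
  exact (abs_sub_le _ _ _).trans (add_le_add hx hd)

lemma dot_eq_of_mem_rotSet (hf : DeviationBounded f u K) {v w : V2} (hv : v ∈ RotSet f)
    (hw : w ∈ RotSet f) : dot v u = dot w u := by
  have hle : ∀ n : ℕ, 0 < n → |dot v u - dot w u| ≤ K / n + K / n := fun n hn =>
    calc |dot v u - dot w u|
        ≤ |dot v u - dot (f^[n] 0) u / n| + |dot (f^[n] 0) u / n - dot w u| :=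
          abs_sub_le _ _ _
      _ ≤ K / n + K / n := by
          rw [abs_sub_comm (dot (f^[n] 0) u / n)]
          exact add_le_add (hf.abs_dot_rotSet_sub_le hv hn) (hf.abs_dot_rotSet_sub_le hw hn)
  have hlim : Tendsto (fun n : ℕ => K / n + K / n) atTop (𝓝 0) := by
    simpa using (tendsto_const_div_atTop_nhds_zero_nat K).add
      (tendsto_const_div_atTop_nhds_zero_nat K)
  have habs : |dot v u - dot w u| ≤ 0 :=
    ge_of_tendsto hlim (eventually_atTop.2 ⟨1, fun n hn => hle n hn⟩)
  exact sub_eq_zero.mp (abs_nonpos_iff.mp habs)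

end DeviationBounded

theorem stmt3_general (h : Equiv.Perm V2)
    (hint : (interior (RotSet ⇑h)).Nonempty)
    (u : V2) (hu : u ≠ 0) :
    ∀ M > 0, ∃ (n : ℤ) (x y : V2),
      |dot (((h ^ n) x - x) - ((h ^ n) y - y)) u| / nrm u > M := by
  by_contra! hbounded
  obtain ⟨M, -, hM⟩ := hbounded
  have hnrm : 0 < nrm u := Real.sqrt_pos.mpr (dot_self_pos hu)
  have hdev : DeviationBounded h u (M * nrm u) := fun n x y => by
    simpa [div_le_iff₀ hnrm, zpow_natCast, Equiv.Perm.coe_pow] using hM n x y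
  obtain ⟨v, hv, w, hw, hne⟩ := exists_dot_ne_of_interior_nonempty hint hu
  exact hne (hdev.dot_eq_of_mem_rotSet hv hw)

/-- If the rotation set of h has nonempty interior, then the deviation of h in every
nonzero direction u is unbounded. -/
theorem stmt3 (h : Equiv.Perm V2) (hh : Continuous ⇑h) (hh' : Continuous ⇑h.symm)
    (hlift : IsLift ⇑h) (hint : (interior (RotSet ⇑h)).Nonempty)
    (u : V2) (hu : u ≠ 0) :
    ∀ M > 0, ∃ (n : ℤ) (x y : V2),
      |dot (((h ^ n) x - x) - ((h ^ n) y - y)) u| / nrm u > M :=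
  stmt3_general h hint u hu
end
end

section
/- Let X be a separable metric space, f : X → X a homeomorphism, and μ an f-invariant ergodic nonatomic Borel probability measure. If φ ∈ L¹(μ) satisfies ∫ φ dμ = 0, then for μ-almost every x ∈ X there is a strictly increasing sequence (nᵢ) of positive integers such that f^{nᵢ}(x) → x and ∑_{k=0}^{nᵢ−1} φ(f^k(x)) → 0 as i → ∞. -/
open Filter Topology MeasureTheory

noncomputable section

/-!
Atkinson's lemma: if `f` preserves the ergodic probability `μ` and `∫ g = 0`, then almost every
point of a measurable set `A` returns to `A` at times `n` with `|S_n g|` arbitrarily small. If the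
points of `A` all of whose returns have `|S_n g| ≥ ε` had positive measure, a typical orbit would
visit them with positive frequency while its Birkhoff sums grow sublinearly (both from the one-sided
ergodic bounds `S_n g ≤ n c + C` for `c > ∫ g`, which follow from Garsia's maximal inequality); but
the sums at these visits are `ε`-separated, so only `o(n)` of them fit before time `n`.

Applying the lemma along the whole orbit to the sets of a countable basis makes `(x, 0)` a cluster
point of `n ↦ (f^[n] x, S_n φ x)` for almost every `x`; a subsequence converging to it is the
required sequence of times.
-/

open Set Function Finset

section MaximalErgodic

variable {α : Type*} {f : α → α} {g : α → ℝ}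

/-- `birkhoffSumMax f g N x = max (birkhoffSum f g 0 x) … (birkhoffSum f g N x)`, given by the
recursion behind Garsia's proof of the maximal ergodic theorem. -/
def birkhoffSumMax (f : α → α) (g : α → ℝ) : ℕ → α → ℝ
  | 0 => fun _ => 0
  | N + 1 => fun x => max 0 (g x + birkhoffSumMax f g N (f x))

theorem birkhoffSumMax_nonneg (N : ℕ) (x : α) : 0 ≤ birkhoffSumMax f g N x := by
  cases N <;> simp [birkhoffSumMax]

theorem birkhoffSumMax_le_succ (N : ℕ) (x : α) :
    birkhoffSumMax f g N x ≤ birkhoffSumMax f g (N + 1) x := by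
  induction N generalizing x with
  | zero => exact birkhoffSumMax_nonneg 1 x
  | succ N ih => exact max_le_max le_rfl (add_le_add le_rfl (ih (f x)))

theorem birkhoffSum_le_birkhoffSumMax {k N : ℕ} (hk : k ≤ N) (x : α) :
    birkhoffSum f g k x ≤ birkhoffSumMax f g N x := by
  induction N generalizing k x with
  | zero => simp [Nat.le_zero.mp hk, birkhoffSumMax]
  | succ N ih =>
    cases k with
    | zero => simpa using birkhoffSumMax_nonneg (N + 1) x
    | succ k =>
      rw [birkhoffSum_succ']
      exact (add_le_add le_rfl (ih (by omega) (f x))).trans (le_max_right _ _)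

variable [MeasurableSpace α] {μ : Measure α}

theorem measurable_birkhoffSumMax (hf : Measurable f) (hg : Measurable g) (N : ℕ) :
    Measurable (birkhoffSumMax f g N) := by
  induction N with
  | zero => exact measurable_const
  | succ N ih => exact measurable_const.max (hg.add (ih.comp hf))

theorem integrable_birkhoffSumMax (hf : MeasurePreserving f μ μ) (hg : Integrable g μ) (N : ℕ) :
    Integrable (birkhoffSumMax f g N) μ := by
  induction N with
  | zero => exact integrable_zero α ℝ μ
  | succ N ih => exact (integrable_zero α ℝ μ).sup (hg.add (hf.integrable_comp_of_integrable ih))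

/-- Garsia's inequality. -/
theorem setIntegral_birkhoffSumMax_pos_nonneg (hf : MeasurePreserving f μ μ) (hgm : Measurable g)
    (hg : Integrable g μ) (N : ℕ) :
    0 ≤ ∫ x in {x | 0 < birkhoffSumMax f g (N + 1) x}, g x ∂μ := by
  set M := birkhoffSumMax f g (N + 1)
  set E := {x | 0 < M x}
  have hM : Integrable M μ := integrable_birkhoffSumMax hf hg (N + 1)
  have hMf : Integrable (fun x => M (f x)) μ := hf.integrable_comp_of_integrable hM
  have hdrop : ∀ x, M x - M (f x) ≤ E.indicator g x := by
    intro x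
    by_cases hx : x ∈ E
    · have hMx : M x = g x + birkhoffSumMax f g N (f x) :=
        max_eq_right (lt_max_iff.mp hx |>.resolve_left (lt_irrefl 0)).le
      rw [indicator_of_mem hx, hMx]
      linarith [birkhoffSumMax_le_succ (f := f) (g := g) N (f x)]
    · have hMx : M x = 0 := (not_lt.mp hx).antisymm (birkhoffSumMax_nonneg _ x)
      rw [indicator_of_notMem hx, hMx]
      linarith [birkhoffSumMax_nonneg (f := f) (g := g) (N + 1) (f x)]
  have hinv : ∫ x, M (f x) ∂μ = ∫ x, M x ∂μ := by
    rw [← integral_map hf.aemeasurable (hf.map_eq.symm ▸ hM.1), hf.map_eq]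
  have hE : MeasurableSet E :=
    measurableSet_lt measurable_const (measurable_birkhoffSumMax hf.measurable hgm _)
  calc 0 = ∫ x, (M x - M (f x)) ∂μ := by rw [integral_sub hM hMf, hinv, sub_self]
    _ ≤ ∫ x, E.indicator g x ∂μ := integral_mono (hM.sub hMf) (hg.indicator hE) hdrop
    _ = ∫ x in E, g x ∂μ := integral_indicator hE

theorem MeasureTheory.MeasurePreserving.integral_nonneg_of_ae_exists_birkhoffSum_pos
    (hf : MeasurePreserving f μ μ) (hgm : Measurable g) (hg : Integrable g μ)
    (h : ∀ᵐ x ∂μ, ∃ n, 0 < birkhoffSum f g n x) : 0 ≤ ∫ x, g x ∂μ := by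
  set s : ℕ → Set α := fun N => {x | 0 < birkhoffSumMax f g (N + 1) x}
  have hs : ∀ N, MeasurableSet (s N) := fun N =>
    measurableSet_lt measurable_const (measurable_birkhoffSumMax hf.measurable hgm _)
  have hmono : Monotone s := monotone_nat_of_le_succ fun N x hx =>
    hx.trans_le (birkhoffSumMax_le_succ _ x)
  have hcover : (⋃ N, s N) =ᵐ[μ] univ := eventuallyEq_univ.mpr <| h.mono fun x ⟨n, hn⟩ =>
    mem_iUnion.mpr ⟨n, hn.trans_le (birkhoffSum_le_birkhoffSumMax n.le_succ x)⟩
  have hlim := tendsto_setIntegral_of_monotone hs hmono hg.integrableOn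
  rw [setIntegral_congr_set hcover, setIntegral_univ] at hlim
  exact ge_of_tendsto' hlim fun N => setIntegral_birkhoffSumMax_pos_nonneg hf hgm hg N

end MaximalErgodic

theorem bddAbove_range_birkhoffSum_apply_iff {α : Type*} (f : α → α) (g : α → ℝ) (x : α) :
    BddAbove (range fun n => birkhoffSum f g n (f x)) ↔
      BddAbove (range fun n => birkhoffSum f g n x) := by
  rw [← Nat.range_of_succ (fun n => birkhoffSum f g n x), bddAbove_union]
  simp only [bddAbove_singleton, true_and, comp_def, birkhoffSum_succ']
  rw [← (OrderIso.addLeft (g x)).bddAbove_image, ← range_comp]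
  rfl

section Ergodic

variable {α : Type*} [MeasurableSpace α] {μ : Measure α} {f : α → α} {g : α → ℝ}

theorem measurable_birkhoffSum (hf : Measurable f) (hg : Measurable g) (n : ℕ) :
    Measurable (birkhoffSum f g n) :=
  Finset.measurable_sum _ fun k _ => hg.comp (hf.iterate k)

theorem Ergodic.ae_bddAbove_range_birkhoffSum (hf : Ergodic f μ) (hgm : Measurable g)
    (hg : Integrable g μ) (hneg : ∫ x, g x ∂μ < 0) :
    ∀ᵐ x ∂μ, BddAbove (range fun n => birkhoffSum f g n x) := by
  set B := {x | BddAbove (range fun n => birkhoffSum f g n x)}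
  have hB : MeasurableSet B :=
    measurableSet_bddAbove_range (measurable_birkhoffSum hf.measurable hgm)
  have hfB : f ⁻¹' B = B := Set.ext fun x => bddAbove_range_birkhoffSum_apply_iff f g x
  rcases hf.ae_empty_or_univ hB hfB with hB0 | hB1
  · refine absurd (hf.toMeasurePreserving.integral_nonneg_of_ae_exists_birkhoffSum_pos hgm hg ?_)
      hneg.not_ge
    filter_upwards [measure_eq_zero_iff_ae_notMem.mp (ae_eq_empty.mp hB0)] with x hx
    by_contra! h
    exact hx ⟨0, forall_mem_range.mpr h⟩
  · exact eventuallyEq_univ.mp hB1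

variable [IsProbabilityMeasure μ]

theorem Ergodic.ae_exists_birkhoffSum_le (hf : Ergodic f μ) (hgm : Measurable g)
    (hg : Integrable g μ) {c : ℝ} (hc : ∫ x, g x ∂μ < c) :
    ∀ᵐ x ∂μ, ∃ C, ∀ n : ℕ, birkhoffSum f g n x ≤ n * c + C := by
  have hgc : ∫ x, (g x - c) ∂μ < 0 := by
    simpa [integral_sub hg (integrable_const c)] using hc
  filter_upwards [hf.ae_bddAbove_range_birkhoffSum (hgm.sub measurable_const)
    (hg.sub (integrable_const c)) hgc] with x ⟨C, hC⟩
  refine ⟨C, fun n => ?_⟩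
  have hn : birkhoffSum f (fun y => g y - c) n x ≤ C := hC (mem_range_self n)
  simp only [birkhoffSum, Finset.sum_sub_distrib, sum_const, card_range, nsmul_eq_mul] at hn ⊢
  linarith

theorem Ergodic.ae_exists_abs_birkhoffSum_le (hf : Ergodic f μ) (hgm : Measurable g)
    (hg : Integrable g μ) (hmean : ∫ x, g x ∂μ = 0) {δ : ℝ} (hδ : 0 < δ) :
    ∀ᵐ x ∂μ, ∃ C, ∀ n : ℕ, |birkhoffSum f g n x| ≤ n * δ + C := by
  have hneg : ∫ x, (-g) x ∂μ < δ := by simpa [integral_neg, hmean] using hδ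
  filter_upwards [hf.ae_exists_birkhoffSum_le hgm hg (hmean ▸ hδ),
    hf.ae_exists_birkhoffSum_le hgm.neg hg.neg hneg] with x ⟨C, hC⟩ ⟨C', hC'⟩
  refine ⟨max C C', fun n => abs_le.mpr ⟨?_, ?_⟩⟩
  · linarith [birkhoffSum_neg f g n x ▸ hC' n, le_max_right C C']
  · linarith [hC n, le_max_left C C']

theorem Ergodic.ae_exists_le_birkhoffSum_indicator (hf : Ergodic f μ) {s : Set α}
    (hs : MeasurableSet s) {c : ℝ} (hc : c < μ.real s) :
    ∀ᵐ x ∂μ, ∃ C, ∀ n : ℕ, n * c ≤ birkhoffSum f (s.indicator 1) n x + C := by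
  have hint : Integrable (s.indicator (1 : α → ℝ)) μ := (integrable_const 1).indicator hs
  have hneg : ∫ x, (-s.indicator (1 : α → ℝ)) x ∂μ < -c := by
    simpa [integral_neg, integral_indicator_one hs] using hc
  filter_upwards [hf.ae_exists_birkhoffSum_le (measurable_one.indicator hs).neg hint.neg hneg]
    with x ⟨C, hC⟩
  exact ⟨C, fun n => by linarith [birkhoffSum_neg f (s.indicator (1 : α → ℝ)) n x ▸ hC n]⟩

end Ergodic

theorem Finset.card_le_of_pairwise_le_abs_sub {ι : Type*} {t : Finset ι} {v : ι → ℝ} {ε M : ℝ}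
    (hε : 0 < ε) (hM : 0 ≤ M) (hsep : (t : Set ι).Pairwise fun j k => ε ≤ |v j - v k|)
    (hbd : ∀ j ∈ t, |v j| ≤ M) : (#t : ℝ) ≤ 2 * M / ε + 1 := by
  set bin : ι → ℕ := fun j => ⌊(v j + M) / ε⌋₊
  have hmaps : ∀ j ∈ t, bin j ∈ range (⌊2 * M / ε⌋₊ + 1) := fun j hj => by
    have := abs_le.mp (hbd j hj)
    exact mem_range.mpr (Nat.lt_succ_of_le (Nat.floor_le_floor (by gcongr; linarith)))
  have hinj : Set.InjOn bin t := by
    intro j hj k hk hjk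
    by_contra hne
    have hnonneg : ∀ i ∈ t, 0 ≤ (v i + M) / ε := fun i hi => by
      have := abs_le.mp (hbd i hi)
      exact div_nonneg (by linarith) hε.le
    have hfloor : ⌊(v j + M) / ε⌋ = ⌊(v k + M) / ε⌋ := by
      rw [← Int.natCast_floor_eq_floor (hnonneg j hj), ← Int.natCast_floor_eq_floor (hnonneg k hk)]
      exact congrArg _ hjk
    have hclose := Int.abs_sub_lt_one_of_floor_eq_floor hfloor
    rw [← sub_div, add_sub_add_right_eq_sub, abs_div, abs_of_pos hε, div_lt_one hε] at hclose
    exact (hsep hj hk hne).not_gt hclose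
  calc (#t : ℝ) ≤ #(range (⌊2 * M / ε⌋₊ + 1)) := by
        exact_mod_cast card_le_card_of_injOn bin hmaps hinj
    _ ≤ 2 * M / ε + 1 := by
        rw [card_range, Nat.cast_add_one]
        gcongr
        exact Nat.floor_le (by positivity)

section Atkinson

variable {α : Type*} {f : α → α} {g : α → ℝ} {A : Set α} {ε : ℝ}

def farReturnSet (f : α → α) (g : α → ℝ) (A : Set α) (ε : ℝ) : Set α :=
  {x ∈ A | ∀ n, 0 < n → f^[n] x ∈ A → ε ≤ |birkhoffSum f g n x|}

theorem le_abs_birkhoffSum_sub_of_iterate_mem_farReturnSet {x : α} {j k : ℕ} (hjk : j < k)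
    (hj : f^[j] x ∈ farReturnSet f g A ε) (hk : f^[k] x ∈ A) :
    ε ≤ |birkhoffSum f g k x - birkhoffSum f g j x| := by
  obtain ⟨m, rfl⟩ := Nat.exists_eq_add_of_lt hjk
  rw [add_assoc, birkhoffSum_add, add_sub_cancel_left]
  refine hj.2 (m + 1) m.succ_pos ?_
  rwa [← iterate_add_apply, add_comm]

theorem birkhoffSum_indicator_farReturnSet_le {x : α} {n : ℕ} {M : ℝ} (hε : 0 < ε) (hM : 0 ≤ M)
    (hbd : ∀ k < n, |birkhoffSum f g k x| ≤ M) :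
    birkhoffSum f ((farReturnSet f g A ε).indicator (1 : α → ℝ)) n x ≤ 2 * M / ε + 1 := by
  classical
  have hcard : birkhoffSum f ((farReturnSet f g A ε).indicator (1 : α → ℝ)) n x =
      (#{k ∈ range n | f^[k] x ∈ farReturnSet f g A ε} : ℝ) := by
    simp only [birkhoffSum, indicator_apply, Pi.one_apply]
    rw [Finset.sum_boole]
  rw [hcard]
  refine card_le_of_pairwise_le_abs_sub hε hM ?_ fun k hk =>
    hbd k (Finset.mem_range.mp (mem_filter.mp hk).1)
  intro j hj k hk hjk
  simp only [coe_filter, Finset.mem_range, mem_ofPred_eq] at hj hk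
  rcases hjk.lt_or_gt with hlt | hlt
  · rw [abs_sub_comm]
    exact le_abs_birkhoffSum_sub_of_iterate_mem_farReturnSet hlt hj.2 hk.2.1
  · exact le_abs_birkhoffSum_sub_of_iterate_mem_farReturnSet hlt hk.2 hj.2.1

theorem frequently_iterate_mem_abs_birkhoffSum_lt {x : α}
    (h : ∀ j, f^[j] x ∈ A → ∀ ε > 0,
      ∃ n, 0 < n ∧ f^[n] (f^[j] x) ∈ A ∧ |birkhoffSum f g n (f^[j] x)| < ε)
    (hx : x ∈ A) (hε : 0 < ε) : ∃ᶠ n in atTop, f^[n] x ∈ A ∧ |birkhoffSum f g n x| < ε := by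
  rw [frequently_atTop']
  intro N
  induction N generalizing ε with
  | zero => simpa using h 0 hx ε hε
  | succ N ih =>
    obtain ⟨n, hn, hnA, hsum⟩ := ih (half_pos hε)
    obtain ⟨m, hm, hmA, hmsum⟩ := h n hnA (ε / 2) (half_pos hε)
    refine ⟨n + m, by omega, by rwa [add_comm, iterate_add_apply], ?_⟩
    calc |birkhoffSum f g (n + m) x|
        ≤ |birkhoffSum f g n x| + |birkhoffSum f g m (f^[n] x)| := by
          rw [birkhoffSum_add]
          exact abs_add_le _ _
      _ < ε / 2 + ε / 2 := add_lt_add hsum hmsum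
      _ = ε := add_halves ε

variable [MeasurableSpace α] {μ : Measure α}

theorem measurableSet_farReturnSet (hf : Measurable f) (hg : Measurable g) (hA : MeasurableSet A) :
    MeasurableSet (farReturnSet f g A ε) := by
  simp only [farReturnSet, ofPred_and, ofPred_forall]
  refine hA.inter (.iInter fun n => .iInter fun _ => ?_)
  exact measurableSet_setOfPred.mpr <| (measurableSet_setOfPred.mp (hf.iterate n hA)).imp
    (measurableSet_setOfPred.mp <|
      measurableSet_le measurable_const (measurable_birkhoffSum hf hg n).abs)

theorem Ergodic.measure_farReturnSet_eq_zero [IsProbabilityMeasure μ] (hf : Ergodic f μ)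
    (hgm : Measurable g) (hg : Integrable g μ) (hmean : ∫ x, g x ∂μ = 0) (hA : MeasurableSet A)
    (hε : 0 < ε) : μ (farReturnSet f g A ε) = 0 := by
  set F := farReturnSet f g A ε
  by_contra hF
  set β := μ.real F
  have hβ : 0 < β := ENNReal.toReal_pos hF (measure_ne_top μ F)
  have hsublinear := hf.ae_exists_abs_birkhoffSum_le hgm hg hmean (δ := ε * β / 8) (by positivity)
  have hfrequent := hf.ae_exists_le_birkhoffSum_indicator
    (measurableSet_farReturnSet (ε := ε) hf.measurable hgm hA) (c := β / 2) (by linarith)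
  obtain ⟨x, ⟨C, hC⟩, ⟨C', hC'⟩⟩ := (hsublinear.and hfrequent).exists
  have hC0 : 0 ≤ C := by simpa using hC 0
  obtain ⟨n, hn⟩ := exists_nat_gt (4 * (2 * C / ε + 1 + C') / β)
  have hup := birkhoffSum_indicator_farReturnSet_le (A := A) (n := n) hε
    (M := n * (ε * β / 8) + C) (by positivity) fun k hk => (hC k).trans (by gcongr)
  have hlow := hC' n
  have hM : 2 * (n * (ε * β / 8) + C) / ε = n * β / 4 + 2 * C / ε := by
    field_simp
    ring
  rw [div_lt_iff₀ hβ] at hn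
  linarith

theorem Ergodic.ae_forall_exists_iterate_mem_abs_birkhoffSum_lt [IsProbabilityMeasure μ]
    (hf : Ergodic f μ) (hgm : Measurable g) (hg : Integrable g μ) (hmean : ∫ x, g x ∂μ = 0)
    (hA : MeasurableSet A) :
    ∀ᵐ x ∂μ, x ∈ A → ∀ ε > 0, ∃ n, 0 < n ∧ f^[n] x ∈ A ∧ |birkhoffSum f g n x| < ε := by
  have hnull (m : ℕ) : ∀ᵐ x ∂μ, x ∉ farReturnSet f g A (1 / (m + 1)) :=
    measure_eq_zero_iff_ae_notMem.mp <|
      hf.measure_farReturnSet_eq_zero hgm hg hmean hA (by positivity)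
  filter_upwards [ae_all_iff.mpr hnull] with x hx hxA ε hε
  obtain ⟨m, hm⟩ := exists_nat_one_div_lt hε
  have := hx m
  simp only [farReturnSet, mem_ofPred_eq, not_and, not_forall, not_le] at this
  obtain ⟨n, hn, hnA, hlt⟩ := this hxA
  exact ⟨n, hn, hnA, hlt.trans hm⟩

end Atkinson

theorem Ergodic.ae_mapClusterPt_iterate_birkhoffSum {α : Type*} [TopologicalSpace α]
    [SecondCountableTopology α] [MeasurableSpace α] [OpensMeasurableSpace α] {μ : Measure α}
    [IsProbabilityMeasure μ] {f : α → α} {g : α → ℝ} (hf : Ergodic f μ) (hgm : Measurable g)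
    (hg : Integrable g μ) (hmean : ∫ x, g x ∂μ = 0) :
    ∀ᵐ x ∂μ, MapClusterPt (x, (0 : ℝ)) atTop fun n => (f^[n] x, birkhoffSum f g n x) := by
  obtain ⟨b, hbc, -, hb⟩ := TopologicalSpace.exists_countable_basis α
  have horbit : ∀ᵐ x ∂μ, ∀ U ∈ b, ∀ j, f^[j] x ∈ U → ∀ ε > 0,
      ∃ n, 0 < n ∧ f^[n] (f^[j] x) ∈ U ∧ |birkhoffSum f g n (f^[j] x)| < ε := by
    refine (ae_ball_iff hbc).mpr fun U hU => ae_all_iff.mpr fun j => ?_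
    exact (hf.toMeasurePreserving.iterate j).quasiMeasurePreserving.ae <|
      hf.ae_forall_exists_iterate_mem_abs_birkhoffSum_lt hgm hg hmean (hb.isOpen hU).measurableSet
  filter_upwards [horbit] with x hx
  rw [mapClusterPt_iff_frequently]
  intro s hs
  rw [nhds_prod_eq, mem_prod_iff] at hs
  obtain ⟨t, ht, t', ht', hst⟩ := hs
  obtain ⟨U, hU, hxU, hUt⟩ := hb.mem_nhds_iff.mp ht
  obtain ⟨ε, hε, hεt'⟩ := Metric.mem_nhds_iff.mp ht'
  refine (frequently_iterate_mem_abs_birkhoffSum_lt (hx U hU) hxU hε).mono fun n hn =>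
    hst ⟨hUt hn.1, hεt' ?_⟩
  simpa [Real.dist_eq] using hn.2

theorem stmt5_general {X : Type*} [MetricSpace X] [TopologicalSpace.SeparableSpace X]
    [MeasurableSpace X] [BorelSpace X]
    (f : X ≃ X)
    (μ : Measure X) [IsProbabilityMeasure μ]
    (hErg : Ergodic ⇑f μ)
    (φ : X → ℝ) (hφ : Integrable φ μ) (hmean : ∫ x, φ x ∂μ = 0) :
    ∀ᵐ x ∂μ, ∃ n : ℕ → ℕ, StrictMono n ∧ (∀ i, 1 ≤ n i) ∧
      Tendsto (fun i => (⇑f)^[n i] x) atTop (𝓝 x) ∧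
      Tendsto (fun i => ∑ k ∈ Finset.range (n i), φ ((⇑f)^[k] x)) atTop (𝓝 (0 : ℝ)) := by
  have := UniformSpace.secondCountable_of_separable X
  obtain ⟨g, hgm, hφg⟩ := hφ.aemeasurable
  have hsum : ∀ᵐ x ∂μ, ∀ n, birkhoffSum f φ n x = birkhoffSum f g n x :=
    ae_all_iff.mpr (hErg.quasiMeasurePreserving.birkhoffSum_ae_eq_of_ae_eq hφg)
  filter_upwards [hErg.ae_mapClusterPt_iterate_birkhoffSum hgm (hφ.congr hφg)
    (integral_congr_ae hφg ▸ hmean), hsum] with x hx hxsum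
  obtain ⟨ψ, hψ, hlim⟩ := hx.tendsto_subseq
  -- drop `ψ 0`, which may vanish
  have hshift := hlim.comp (tendsto_add_atTop_nat 1)
  refine ⟨fun i => ψ (i + 1), fun a b h => hψ (by omega),
    fun i => (Nat.le_add_left 1 i).trans (hψ.id_le (i + 1)), hshift.fst_nhds, ?_⟩
  have hsnd := hshift.snd_nhds
  simp only [comp_def, ← hxsum] at hsnd
  exact hsnd

/-- Corollary of Atkinson's lemma for a homeomorphism of a separable metric space with an
ergodic nonatomic invariant Borel probability measure. -/
theorem stmt5 {X : Type*} [MetricSpace X] [TopologicalSpace.SeparableSpace X]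
    [MeasurableSpace X] [BorelSpace X]
    (f : X ≃ X) (hf : Continuous ⇑f) (hf' : Continuous ⇑f.symm)
    (μ : Measure X) [IsProbabilityMeasure μ] [MeasureTheory.NullSingletonClass μ]
    (hErg : Ergodic ⇑f μ)
    (φ : X → ℝ) (hφ : Integrable φ μ) (hmean : ∫ x, φ x ∂μ = 0) :
    ∀ᵐ x ∂μ, ∃ n : ℕ → ℕ, StrictMono n ∧ (∀ i, 1 ≤ n i) ∧
      Tendsto (fun i => (⇑f)^[n i] x) atTop (𝓝 x) ∧
      Tendsto (fun i => ∑ k ∈ Finset.range (n i), φ ((⇑f)^[k] x)) atTop (𝓝 (0 : ℝ)) :=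
  stmt5_general f μ hErg φ hφ hmean
end
end
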